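/- arXiv:1311.3881 — 4 statements merged into one kernel-verified Lean document; each statement's English description precedes it below -/
import Mathlib

section
/- Let f(X_t) = h(t, f₁(X_t), …, f_k(X_t)) where h: ℝ₊ × ℝᵏ → ℝ is twice continuously differentiable and each f_i admits both iterated functional derivatives Δ_t Δ_x f_i and Δ_x Δ_t f_i. Then the Lie bracket satisfies the chain rule 𝔏f(X_t) = Σ_{i=1}^{k} ∂h/∂x_i (t, f₁(X_t), …, f_k(X_t)) · 𝔏f_i(X_t). -/
open Filter Topology MeasureTheory

noncomputable section

/-- Flat extension of a path `Y` at time `t`: constant equal to `Y t` after `t`. -/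
def flatExt (t : ℝ) (Y : ℝ → ℝ) : ℝ → ℝ := fun u => if u ≤ t then Y u else Y t

/-- Bumped path: the value at the current time `t` is shifted by `h`. -/
def bump (t h : ℝ) (Y : ℝ → ℝ) : ℝ → ℝ := fun u => if u = t then Y t + h else Y u

/-- Dupire time functional derivative `Δ_t f (Y_t) = v`. -/
def HasTimeDeriv (f : ℝ → (ℝ → ℝ) → ℝ) (t : ℝ) (Y : ℝ → ℝ) (v : ℝ) : Prop :=
  Tendsto (fun δ : ℝ => (f (t + δ) (flatExt t Y) - f t Y) / δ) (𝓝[>] 0) (𝓝 v)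

/-- Dupire space functional derivative `Δ_x f (Y_t) = v`. -/
def HasSpaceDeriv (f : ℝ → (ℝ → ℝ) → ℝ) (t : ℝ) (Y : ℝ → ℝ) (v : ℝ) : Prop :=
  Tendsto (fun h : ℝ => (f t (bump t h Y) - f t Y) / h) (𝓝[≠] 0) (𝓝 v)

/-!
Both iterated derivatives of `f = h(t, f₁, …, f_k)` are derivatives of `D h` along a curve
in `ℝ × ℝᵏ`: the bump curve `s ↦ (t, fᵢ(Y^s))`, with velocity `(0, Δ_x fᵢ)`, for `Δ_x Δ_t f`,
and the flat curve `δ ↦ (t + δ, fᵢ(Y_{t,δ}))`, with velocity `(1, Δ_t fᵢ)`, for `Δ_t Δ_x f`.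
The product rule gives `D²h (0, Δ_x f) (1, Δ_t f) + Σ ∂ᵢh Δ_x Δ_t fᵢ` and
`D²h (1, Δ_t f) (0, Δ_x f) + Σ ∂ᵢh Δ_t Δ_x fᵢ`, and the second-order terms cancel by the
symmetry of `D²h` (Schwarz, as `h` is `C²`).
-/

open Set

lemma LinearMap.apply_prod_pi_eq_sum {R M ι : Type*} [CommSemiring R] [AddCommMonoid M]
    [Module R M] [Fintype ι] [DecidableEq ι] (L : R × (ι → R) →ₗ[R] M) (a : R) (c : ι → R) :
    L (a, c) = a • L (1, 0) + ∑ i, c i • L (0, Pi.single i 1) := by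
  have hc : ((0 : R), c) = ∑ i, c i • ((0 : R), (Pi.single i 1 : ι → R)) := by
    conv_lhs => rw [pi_eq_sum_univ' c]
    simp [Prod.ext_iff, Prod.snd_sum, Prod.fst_sum]
  rw [show (a, c) = a • ((1 : R), (0 : ι → R)) + (0, c) by simp, map_add, map_smul, hc,
    map_sum]
  simp only [map_smul]

lemma ContinuousLinearMap.apply_prod_pi_eq_sum {𝕜 ι : Type*} [RCLike 𝕜] [Fintype ι]
    [DecidableEq ι] (L : 𝕜 × (ι → 𝕜) →L[𝕜] 𝕜) (a : 𝕜) (c : ι → 𝕜) :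
    L (a, c) = a * L (1, 0) + ∑ i, L (0, Pi.single i 1) * c i := by
  simpa [mul_comm] using (L : 𝕜 × (ι → 𝕜) →ₗ[𝕜] 𝕜).apply_prod_pi_eq_sum a c

theorem HasDerivWithinAt.fderiv_apply {𝕜 E F : Type*} [NontriviallyNormedField 𝕜]
    [NormedAddCommGroup E] [NormedSpace 𝕜 E] [NormedAddCommGroup F] [NormedSpace 𝕜 F]
    {h : E → F} {γ c : 𝕜 → E} {γ' c' : E} {s : Set 𝕜} {x : 𝕜}
    (hh : DifferentiableAt 𝕜 (fderiv 𝕜 h) (γ x))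
    (hγ : HasDerivWithinAt γ γ' s x) (hc : HasDerivWithinAt c c' s x) :
    HasDerivWithinAt (fun y => fderiv 𝕜 h (γ y) (c y))
      (fderiv 𝕜 (fderiv 𝕜 h) (γ x) γ' (c x) + fderiv 𝕜 h (γ x) c') s x :=
  (hh.hasFDerivAt.comp_hasDerivWithinAt x hγ).clm_apply hc

lemma bump_zero (t : ℝ) (Y : ℝ → ℝ) : bump t 0 Y = Y := by
  funext u
  by_cases hu : u = t <;> simp [bump, hu]

lemma flatExt_of_le {t u : ℝ} (Y : ℝ → ℝ) (hu : u ≤ t) : flatExt t Y u = Y u := by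
  simp [flatExt, hu]

lemma hasSpaceDeriv_iff {f : ℝ → (ℝ → ℝ) → ℝ} {t : ℝ} {Y : ℝ → ℝ} {v : ℝ} :
    HasSpaceDeriv f t Y v ↔ HasDerivAt (fun s => f t (bump t s Y)) v 0 := by
  rw [hasDerivAt_iff_tendsto_slope, HasSpaceDeriv]
  refine tendsto_congr fun s => ?_
  simp [slope_def_field, bump_zero]

lemma hasTimeDeriv_iff {f : ℝ → (ℝ → ℝ) → ℝ} {t : ℝ} {Y : ℝ → ℝ} {v : ℝ}
    (hf : f t (flatExt t Y) = f t Y) :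
    HasTimeDeriv f t Y v ↔ HasDerivWithinAt (fun δ => f (t + δ) (flatExt t Y)) v (Ioi 0) 0 := by
  rw [hasDerivWithinAt_iff_tendsto_slope' self_notMem_Ioi, HasTimeDeriv]
  refine tendsto_congr fun δ => ?_
  simp [slope_def_field, hf]

section FderivApply

variable {k : ℕ} {t : ℝ} {Y : ℝ → ℝ} {h : ℝ × (Fin k → ℝ) → ℝ}
  {F G : Fin k → ℝ → (ℝ → ℝ) → ℝ} {a : ℝ} {V W : Fin k → ℝ}

lemma hasSpaceDeriv_fderiv_apply (hh : DifferentiableAt ℝ (fderiv ℝ h) (t, fun i => F i t Y))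
    (hF : ∀ i, HasSpaceDeriv (F i) t Y (V i)) (hG : ∀ i, HasSpaceDeriv (G i) t Y (W i)) :
    HasSpaceDeriv (fun s Z => fderiv ℝ h (s, fun i => F i s Z) (a, fun i => G i s Z)) t Y
      (fderiv ℝ (fderiv ℝ h) (t, fun i => F i t Y) (0, V) (a, fun i => G i t Y)
        + fderiv ℝ h (t, fun i => F i t Y) (0, W)) := by
  have hγ : HasDerivAt (fun s => ((t, fun i => F i t (bump t s Y)) : ℝ × (Fin k → ℝ)))
      (0, V) 0 :=
    (hasDerivAt_const 0 t).prodMk (hasDerivAt_pi.2 fun i => hasSpaceDeriv_iff.1 (hF i))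
  have hc : HasDerivAt (fun s => ((a, fun i => G i t (bump t s Y)) : ℝ × (Fin k → ℝ)))
      (0, W) 0 :=
    (hasDerivAt_const 0 a).prodMk (hasDerivAt_pi.2 fun i => hasSpaceDeriv_iff.1 (hG i))
  rw [hasSpaceDeriv_iff, ← hasDerivWithinAt_univ]
  simpa only [bump_zero] using
    (hγ.hasDerivWithinAt (s := univ)).fderiv_apply (by simpa only [bump_zero])
      hc.hasDerivWithinAt

lemma hasTimeDeriv_fderiv_apply (hh : DifferentiableAt ℝ (fderiv ℝ h) (t, fun i => F i t Y))
    (hF : ∀ i, HasTimeDeriv (F i) t Y (V i)) (hG : ∀ i, HasTimeDeriv (G i) t Y (W i))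
    (hFflat : ∀ i, F i t (flatExt t Y) = F i t Y)
    (hGflat : ∀ i, G i t (flatExt t Y) = G i t Y) :
    HasTimeDeriv (fun s Z => fderiv ℝ h (s, fun i => F i s Z) (a, fun i => G i s Z)) t Y
      (fderiv ℝ (fderiv ℝ h) (t, fun i => F i t Y) (1, V) (a, fun i => G i t Y)
        + fderiv ℝ h (t, fun i => F i t Y) (0, W)) := by
  have hγ : HasDerivWithinAt
      (fun δ => ((t + δ, fun i => F i (t + δ) (flatExt t Y)) : ℝ × (Fin k → ℝ)))
      (1, V) (Ioi 0) 0 :=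
    ((hasDerivAt_id 0).const_add t).hasDerivWithinAt.prodMk
      (hasDerivWithinAt_pi.2 fun i => (hasTimeDeriv_iff (hFflat i)).1 (hF i))
  have hc : HasDerivWithinAt
      (fun δ => ((a, fun i => G i (t + δ) (flatExt t Y)) : ℝ × (Fin k → ℝ)))
      (0, W) (Ioi 0) 0 :=
    (hasDerivWithinAt_const 0 _ a).prodMk
      (hasDerivWithinAt_pi.2 fun i => (hasTimeDeriv_iff (hGflat i)).1 (hG i))
  rw [hasTimeDeriv_iff (by simp only [hFflat, hGflat])]
  simpa only [add_zero, hFflat, hGflat] using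
    hγ.fderiv_apply (by simpa only [add_zero, hFflat]) hc

end FderivApply

/-- Proposition 3.4, chain rule for the Lie bracket: if
`f(X_t) = h(t, f₁(X_t), …, f_k(X_t))` with `h` smooth and each `fᵢ` having both iterated
derivatives, then `𝔏f(X_t) = Σᵢ ∂h/∂xᵢ · 𝔏fᵢ(X_t)`, where
`Δ_t f = ∂_t h + Σ ∂ᵢh Δ_t fᵢ` and `Δ_x f = Σ ∂ᵢh Δ_x fᵢ`. -/
theorem statement3 (k : ℕ) (t : ℝ) (Y : ℝ → ℝ)
    (h : ℝ × (Fin k → ℝ) → ℝ) (hh : ContDiff ℝ 2 h)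
    (F Ft Fx : Fin k → ℝ → (ℝ → ℝ) → ℝ)
    (hFt : ∀ i s Z, HasTimeDeriv (F i) s Z (Ft i s Z))
    (hFx : ∀ i s Z, HasSpaceDeriv (F i) s Z (Fx i s Z))
    (A B : Fin k → ℝ)
    (hA : ∀ i, HasTimeDeriv (Fx i) t Y (A i))   -- Δ_t Δ_x fᵢ (Y_t)
    (hB : ∀ i, HasSpaceDeriv (Ft i) t Y (B i))  -- Δ_x Δ_t fᵢ (Y_t)
    (hadapt : ∀ i (s : ℝ) (Z W : ℝ → ℝ), (∀ u, u ≤ s → Z u = W u) →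
      F i s Z = F i s W ∧ Ft i s Z = Ft i s W ∧ Fx i s Z = Fx i s W) :
    ∃ v w : ℝ,
      -- `Δ_x (Δ_t f) (Y_t) = v`:
      HasSpaceDeriv (fun s Z => fderiv ℝ h (s, fun i => F i s Z) (1, 0)
          + ∑ i, fderiv ℝ h (s, fun i => F i s Z) (0, Pi.single i 1) * Ft i s Z) t Y v ∧
      -- `Δ_t (Δ_x f) (Y_t) = w`:
      HasTimeDeriv (fun s Z =>
          ∑ i, fderiv ℝ h (s, fun i => F i s Z) (0, Pi.single i 1) * Fx i s Z) t Y w ∧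
      -- the chain rule for the Lie bracket:
      v - w = ∑ i, fderiv ℝ h (t, fun i => F i t Y) (0, Pi.single i 1) * (B i - A i) := by
  set p : ℝ × (Fin k → ℝ) := (t, fun i => F i t Y)
  set dX : ℝ × (Fin k → ℝ) := (0, fun i => Fx i t Y)
  set dT : ℝ × (Fin k → ℝ) := (1, fun i => Ft i t Y)
  have hD2 : DifferentiableAt ℝ (fderiv ℝ h) p :=
    (hh.fderiv_right le_rfl).differentiable one_ne_zero p
  have hsymm : IsSymmSndFDerivAt ℝ h p := hh.contDiffAt.isSymmSndFDerivAt (by norm_num)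
  have hflat i := hadapt i t (flatExt t Y) Y fun _ => flatExt_of_le Y
  refine ⟨fderiv ℝ (fderiv ℝ h) p dX dT + fderiv ℝ h p (0, B),
    fderiv ℝ (fderiv ℝ h) p dT dX + fderiv ℝ h p (0, A), ?_, ?_, ?_⟩
  · convert hasSpaceDeriv_fderiv_apply hD2 (fun i => hFx i t Y) hB using 3 with s Z
    rw [ContinuousLinearMap.apply_prod_pi_eq_sum _ _ (fun i => Ft i s Z), one_mul]
  · convert hasTimeDeriv_fderiv_apply hD2 (fun i => hFt i t Y) hA (fun i => (hflat i).1)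
      (fun i => (hflat i).2.2) using 3 with s Z
    rw [ContinuousLinearMap.apply_prod_pi_eq_sum _ _ (fun i => Fx i s Z), zero_mul, zero_add]
  · rw [hsymm dX dT, add_sub_add_left_eq_sub, ← map_sub, Prod.mk_sub_mk, sub_zero,
      ContinuousLinearMap.apply_prod_pi_eq_sum, zero_mul, zero_add]
    rfl
end
end

section
/- Let E be the pathwise Doléans-Dade exponential functional on càdlàg paths: E(Y_t) = exp{y_t - ½ QV(Y_t)} ∏_{0<s≤t} (1 + Δy_s) exp{-Δy_s + ½(Δy_s)²}, where Δy_s = y_s - y_{s-} and QV is the pathwise quadratic variation functional satisfying Δ_t QV = 0, Δ_x QV(Y_t) = 2(y_t - y_{t-}), Δ_{xx} QV = 2. Then Δ_t E(Y_t) = 0, Δ_x E(Y_t) = E(Y_t)/(1 + Δy_t), and Δ_{xx} E(Y_t) = 0. -/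
open Filter Topology MeasureTheory

noncomputable section

/-- the pathwise Doléans-Dade exponential functional `E`, for which the endpoint
bump acts by `E(Y_t^h) = exp(y_t + h - (Q + (Δy_t + h)²)/2) · P · (1 + Δy_t + h) ·
exp(-(Δy_t + h) + (Δy_t + h)²/2)` (with `Q = QV(Y_{t-})`, `P` the product of the jump factors
strictly before `t`, `Δy_t = y_t - y_{t-}`) and the flat extension creates no new jump nor
quadratic variation, satisfies `Δ_t E(Y_t) = 0`, `Δ_x E(Y_t) = E(Y_t)/(1 + Δy_t)` and
`Δ_{xx} E(Y_t) = 0`. -/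
theorem statement6 (t : ℝ) (Y : ℝ → ℝ) (E Ex : ℝ → (ℝ → ℝ) → ℝ)
    (yminus Q P : ℝ)
    (hleft : Tendsto Y (𝓝[<] t) (𝓝 yminus))
    (hjump : 1 + (Y t - yminus) ≠ 0)
    (hbump : ∀ h : ℝ, E t (bump t h Y) =
      Real.exp (Y t + h - (Q + (Y t - yminus + h)^2) / 2) * P *
        ((1 + (Y t - yminus + h)) *
          Real.exp (-(Y t - yminus + h) + (Y t - yminus + h)^2 / 2)))
    (hflat : ∀ δ : ℝ, 0 ≤ δ → E (t + δ) (flatExt t Y) = E t Y)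
    -- `Ex` is the space-derivative functional `Δ_x E (Z_t) = E(Z_t)/(1 + Δz_t)`:
    (hEx : ∀ h : ℝ, Ex t (bump t h Y) = E t (bump t h Y) / (1 + (Y t - yminus + h))) :
    HasTimeDeriv E t Y 0 ∧
    HasSpaceDeriv E t Y (E t Y / (1 + (Y t - yminus))) ∧
    HasSpaceDeriv Ex t Y 0 := by

  set a := Y t - yminus with ha
  set C := Real.exp (yminus - Q / 2) * P with hC
  have hb0 : bump t 0 Y = Y := by
    funext u; by_cases h : u = t <;> simp [bump, h]
  have key : ∀ h : ℝ, E t (bump t h Y) = C * (1 + (a + h)) := by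
    intro h
    rw [hbump h]
    have e1 : Real.exp (Y t + h - (Q + (a + h) ^ 2) / 2) *
        Real.exp (-(a + h) + (a + h) ^ 2 / 2) = Real.exp (yminus - Q / 2) := by
      rw [← Real.exp_add]; congr 1; ring
    calc Real.exp (Y t + h - (Q + (a + h) ^ 2) / 2) * P *
          ((1 + (a + h)) * Real.exp (-(a + h) + (a + h) ^ 2 / 2))
        = (Real.exp (Y t + h - (Q + (a + h) ^ 2) / 2) *
            Real.exp (-(a + h) + (a + h) ^ 2 / 2)) * P * (1 + (a + h)) := by ring
      _ = C * (1 + (a + h)) := by rw [e1]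
  have hE0 : E t Y = C * (1 + a) := by
    have := key 0; rwa [hb0, add_zero] at this
  refine ⟨?_, ?_, ?_⟩
  · -- time derivative
    apply Tendsto.congr' (f₁ := fun _ : ℝ => (0 : ℝ))
    · filter_upwards [self_mem_nhdsWithin] with δ hδ
      rw [hflat δ (le_of_lt hδ), sub_self, zero_div]
    · exact tendsto_const_nhds
  · -- space derivative of E
    have hval : E t Y / (1 + a) = C := by
      rw [hE0, mul_div_assoc, div_self hjump, mul_one]
    rw [hval]
    apply Tendsto.congr' (f₁ := fun _ : ℝ => C)
    · filter_upwards [self_mem_nhdsWithin] with h hh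
      have hh' : h ≠ 0 := hh
      rw [key h, hE0]
      field_simp
      ring
    · exact tendsto_const_nhds
  · -- space derivative of Ex
    have hxa : Ex t Y = C := by
      have := hEx 0
      rw [hb0, add_zero] at this
      rw [this, hE0, mul_div_assoc, div_self hjump, mul_one]
    have habs : (0 : ℝ) < |1 + a| := abs_pos.mpr hjump
    have hev : ∀ᶠ h : ℝ in 𝓝 (0 : ℝ), |h| < |1 + a| := by
      have : Tendsto (fun h : ℝ => |h|) (𝓝 0) (𝓝 0) := by
        simpa using (continuous_abs.tendsto (0 : ℝ))
      exact this.eventually_lt_const habs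
    apply Tendsto.congr' (f₁ := fun _ : ℝ => (0 : ℝ))
    · filter_upwards [self_mem_nhdsWithin, eventually_nhdsWithin_of_eventually_nhds hev]
        with h hh hlt
      have hne : 1 + (a + h) ≠ 0 := by
        intro h0
        have : h = -(1 + a) := by linarith
        rw [this, abs_neg] at hlt
        exact lt_irrefl _ hlt
      rw [hEx h, key h, hxa, mul_div_assoc, div_self hne, mul_one, sub_self, zero_div]
    · exact tendsto_const_nhds
end
end

section
/- Let x be a continuous semimartingale and let I_h be the pathwise stochastic integral functional with Δ_t I_h = 0, Δ_x I_h(Y_t) = h(Y_{t-}), Δ_{xx} I_h = 0, where h is a regular functional admitting a time derivative Δ_t h. Then at any continuous path Y_t (i.e. Δy_t = y_t - y_{t-} = 0), the Lie bracket of the stochastic integral functional is 𝔏 I_h(Y_t) = -Δ_t h(Y_t). -/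
open Filter Topology MeasureTheory

noncomputable section

/-- The path `Y_{t-}`: equal to `Y` before `t`, with endpoint value the left limit `y_{t-}`. -/
def pathLeft (t : ℝ) (Z : ℝ → ℝ) : ℝ → ℝ := fun u => if u = t then Function.leftLim Z t else Z u

/-! Taking the left limit changes nothing at a continuous path, and the flat extension of any
path is continuous at every time after the extension point. So along the flat extension the
functional `h(Y_{·-})` coincides with `h`, and their time derivatives agree. -/

theorem hasSpaceDeriv_const (c t : ℝ) (Y : ℝ → ℝ) :
    HasSpaceDeriv (fun _ _ => c) t Y 0 := by
  simp [HasSpaceDeriv]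

theorem pathLeft_eq_self {t : ℝ} {Z : ℝ → ℝ} (hZ : Function.leftLim Z t = Z t) :
    pathLeft t Z = Z := by
  funext u
  by_cases hu : u = t
  · subst hu; simp [pathLeft, hZ]
  · simp [pathLeft, hu]

theorem flatExt_of_lt {t u : ℝ} (Y : ℝ → ℝ) (hu : t < u) : flatExt t Y u = Y t := by
  simp [flatExt, not_le.2 hu]

theorem leftLim_flatExt {t s : ℝ} (Y : ℝ → ℝ) (hs : t < s) :
    Function.leftLim (flatExt t Y) s = flatExt t Y s := by
  rw [flatExt_of_lt Y hs]
  apply leftLim_eq_of_tendsto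
  refine tendsto_const_nhds.congr' ?_
  filter_upwards [Ioo_mem_nhdsLT hs] with u hu
  exact (flatExt_of_lt Y hu.1).symm

theorem hasTimeDeriv_comp_pathLeft {h : ℝ → (ℝ → ℝ) → ℝ} {t v : ℝ} {Y : ℝ → ℝ}
    (hY : Function.leftLim Y t = Y t) (hh : HasTimeDeriv h t Y v) :
    HasTimeDeriv (fun s Z => h s (pathLeft s Z)) t Y v := by
  refine hh.congr' ?_
  filter_upwards [self_mem_nhdsWithin] with δ (hδ : 0 < δ)
  have hlt : t < t + δ := lt_add_of_pos_right t hδ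
  rw [pathLeft_eq_self (leftLim_flatExt Y hlt), pathLeft_eq_self hY]

theorem statement15_general (h : ℝ → (ℝ → ℝ) → ℝ) (t : ℝ) (Y : ℝ → ℝ) (v : ℝ)
    (hcont : Function.leftLim Y t = Y t)
    (hth : HasTimeDeriv h t Y v) :
    -- `Δ_x (Δ_t I_h) (Y_t) = 0`:
    HasSpaceDeriv (fun _ _ => (0:ℝ)) t Y 0 ∧
    -- `Δ_t (Δ_x I_h) (Y_t) = Δ_t h (Y_t)`:
    HasTimeDeriv (fun s Z => h s (pathLeft s Z)) t Y v ∧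
    -- hence `𝔏 I_h (Y_t) = -Δ_t h (Y_t)`:
    (0 : ℝ) - v = -v :=
  ⟨hasSpaceDeriv_const 0 t Y, hasTimeDeriv_comp_pathLeft hcont hth, zero_sub v⟩

/-- for the pathwise stochastic integral functional `I_h` (with `Δ_t I_h = 0`,
`Δ_x I_h(Y_t) = h(Y_{t-})`, `Δ_{xx} I_h = 0`), at any continuous path (`Δy_t = 0`) one has
`Δ_x Δ_t I_h (Y_t) = 0` and `Δ_t Δ_x I_h (Y_t) = Δ_t h (Y_t)`, hence
`𝔏 I_h (Y_t) = -Δ_t h (Y_t)`. -/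
theorem statement15 (h I : ℝ → (ℝ → ℝ) → ℝ) (t : ℝ) (Y : ℝ → ℝ) (v : ℝ)
    (hIt : ∀ (s : ℝ) (Z : ℝ → ℝ), HasTimeDeriv I s Z 0)
    (hIx : ∀ (s : ℝ) (Z : ℝ → ℝ), HasSpaceDeriv I s Z (h s (pathLeft s Z)))
    (hcont : Function.leftLim Y t = Y t)
    (hth : HasTimeDeriv h t Y v) :
    -- `Δ_x (Δ_t I_h) (Y_t) = 0`:
    HasSpaceDeriv (fun _ _ => (0:ℝ)) t Y 0 ∧
    -- `Δ_t (Δ_x I_h) (Y_t) = Δ_t h (Y_t)`: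
    HasTimeDeriv (fun s Z => h s (pathLeft s Z)) t Y v ∧
    -- hence `𝔏 I_h (Y_t) = -Δ_t h (Y_t)`:
    (0 : ℝ) - v = -v :=
  statement15_general h t Y v hcont hth
end
end

section
/- In the Black–Scholes model dx_t = σ x_t dw_t (r = 0, σ > 0, x₀ > 0), the Delta of the forward-start floating-strike Asian call with payoff g(X_T) = (x_T - (1/(T - t₁)) ∫_{t₁}^{T} x_u du)⁺, 0 < t₁ < T, satisfies Δ_{x₀} E[g(X_T)] = E[ g(X_T) · w_{t₁}/(t₁ σ x₀) ]. -/
/-!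
Writing `e(t, x) = exp (σ x - σ² t / 2)`, the price path factors as
`x_u = x₀ · e(t₁, w_{t₁}) · e(u - t₁, w_u - w_{t₁})`, and the Asian payoff is positively
homogeneous, so `g = x₀ · A · H` with `A = e(t₁, w_{t₁})` and `H` a functional of the increments of
`w` after `t₁` only, hence independent of `w_{t₁}`. Thus `E[g] = x₀ E[A] E[H] = x₀ E[H]` is linear
in `x₀`, and `E[g w_{t₁}] = x₀ E[w_{t₁} A] E[H] = x₀ σ t₁ E[H]`, where both Gaussian moments come
from the moment generating function of `w_{t₁} ~ N(0, t₁)` and its derivative.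
-/

open Filter Topology MeasureTheory ProbabilityTheory Real
open scoped NNReal

noncomputable section

def expMartingale (σ t x : ℝ) : ℝ := exp (σ * x - σ ^ 2 * t / 2)

def forwardStartAsianCall (a b : ℝ) (x : ℝ → ℝ) : ℝ :=
  max (x b - 1 / (b - a) * ∫ u in a..b, x u) 0

end

lemma expMartingale_pos (σ t x : ℝ) : 0 < expMartingale σ t x := exp_pos _

lemma measurable_expMartingale (σ t : ℝ) : Measurable (expMartingale σ t) := by
  unfold expMartingale
  fun_prop

lemma expMartingale_eq_mul_sub (σ s t x y : ℝ) :
    expMartingale σ t x = expMartingale σ s y * expMartingale σ (t - s) (x - y) := by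
  simp only [expMartingale, ← exp_add]
  ring_nf

lemma expMartingale_eq_exp_mul_mul (σ t x : ℝ) :
    expMartingale σ t x = exp (σ * x) * exp (-(σ ^ 2 * t / 2)) := by
  rw [expMartingale, ← exp_add, sub_eq_add_neg]

lemma forwardStartAsianCall_const_mul (a b : ℝ) (x : ℝ → ℝ) {c : ℝ} (hc : 0 ≤ c) :
    forwardStartAsianCall a b (fun u => c * x u) = c * forwardStartAsianCall a b x := by
  rw [forwardStartAsianCall, forwardStartAsianCall, intervalIntegral.integral_const_mul,
    mul_max_of_nonneg _ _ hc, mul_zero]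
  ring_nf

lemma forwardStartAsianCall_mul_expMartingale (σ a b : ℝ) (f : ℝ → ℝ) {y : ℝ} (hy : 0 ≤ y) :
    forwardStartAsianCall a b (fun u => y * expMartingale σ u (f u)) =
      y * expMartingale σ a (f a) *
        forwardStartAsianCall a b (fun u => expMartingale σ (u - a) (f u - f a)) := by
  rw [← forwardStartAsianCall_const_mul _ _ _ (mul_nonneg hy (expMartingale_pos _ _ _).le)]
  simp only [mul_assoc, ← expMartingale_eq_mul_sub]

lemma measurable_intervalIntegral_of_continuous_of_measurable {α : Type*}
    {m : MeasurableSpace α} {F : ℝ → α → ℝ} (hcont : ∀ ω, Continuous fun u => F u ω)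
    (hmeas : ∀ u, Measurable (F u)) (a b : ℝ) :
    Measurable fun ω => ∫ u in a..b, F u ω := by
  have hF : StronglyMeasurable (Function.uncurry F) :=
    (measurable_uncurry_of_continuous_of_measurable hcont hmeas).stronglyMeasurable
  exact hF.integral_prod_left.measurable.sub hF.integral_prod_left.measurable

lemma measurable_forwardStartAsianCall {α : Type*} {m : MeasurableSpace α} {F : ℝ → α → ℝ}
    (hcont : ∀ ω, Continuous fun u => F u ω) (hmeas : ∀ u, Measurable (F u)) (a b : ℝ) :
    Measurable fun ω => forwardStartAsianCall a b (fun u => F u ω) :=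
  ((hmeas b).sub
    ((measurable_intervalIntegral_of_continuous_of_measurable hcont hmeas a b).const_mul _)).max
    measurable_const

lemma measurable_comap_increments_forwardStartAsianCall {Ω : Type*} {w : ℝ → Ω → ℝ}
    (hwcont : ∀ ω, Continuous fun t => w t ω) (σ a b : ℝ) :
    Measurable[MeasurableSpace.comap (fun ω u => w (a + u) ω - w a ω) MeasurableSpace.pi]
      fun ω => forwardStartAsianCall a b fun u => expMartingale σ (u - a) (w u ω - w a ω) := by
  refine measurable_forwardStartAsianCall (fun ω => ?_) (fun u => ?_) a b
  · have := hwcont ω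
    unfold expMartingale
    fun_prop
  · have hincrement := (measurable_pi_apply (u - a)).comp
      (comap_measurable (m := MeasurableSpace.pi) fun ω u => w (a + u) ω - w a ω)
    simp only [Function.comp_def, add_sub_cancel] at hincrement
    exact (measurable_expMartingale σ _).comp hincrement

lemma integral_mul_exp_mul_gaussianReal (m : ℝ) (v : ℝ≥0) (t : ℝ) :
    ∫ x, x * exp (t * x) ∂gaussianReal m v = (m + v * t) * exp (m * t + v * t ^ 2 / 2) := by
  have h := hasDerivAt_mgf (X := id) (μ := gaussianReal m v) (t := t) (by simp)
  rw [mgf_id_gaussianReal] at h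
  have hexponent : HasDerivAt (fun s => m * s + v * s ^ 2 / 2) (m + v * t) t :=
    (((hasDerivAt_id t).const_mul m).fun_add
      (((hasDerivAt_pow 2 t).const_mul (v : ℝ)).div_const 2)).congr_deriv (by norm_num; ring)
  exact h.unique (hexponent.exp.congr_deriv (mul_comm _ _))

lemma integral_expMartingale_gaussianReal (σ : ℝ) (v : ℝ≥0) :
    ∫ x, expMartingale σ v x ∂gaussianReal 0 v = 1 := by
  have h := congrFun (mgf_id_gaussianReal (μ := 0) (v := v)) σ
  simp only [mgf, id] at h
  simp_rw [expMartingale_eq_exp_mul_mul]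
  rw [integral_mul_const, h, ← exp_add]
  convert exp_zero using 2
  ring

lemma integral_mul_expMartingale_gaussianReal (σ : ℝ) (v : ℝ≥0) :
    ∫ x, x * expMartingale σ v x ∂gaussianReal 0 v = σ * v := by
  simp_rw [expMartingale_eq_exp_mul_mul, ← mul_assoc]
  rw [integral_mul_const, integral_mul_exp_mul_gaussianReal, mul_assoc, ← exp_add]
  convert mul_one (σ * v) using 2 <;> ring_nf
  exact exp_zero

namespace ProbabilityTheory.IndepFun

variable {Ω : Type*} [MeasurableSpace Ω] {μ : Measure Ω}

lemma of_measurable_comap {β γ δ : Type*} [MeasurableSpace β] [mγ : MeasurableSpace γ]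
    [MeasurableSpace δ] {X : Ω → β} {Y : Ω → γ} {Z : Ω → δ} (h : IndepFun X Y μ)
    (hZ : Measurable[mγ.comap Y] Z) : IndepFun X Z μ := by
  rw [IndepFun_iff_Indep] at h ⊢
  exact indep_of_indep_of_le_right h hZ.comap_le

lemma integral_comp_mul_eq_integral_map_mul {X Y : Ω → ℝ} (h : IndepFun X Y μ)
    (hX : Measurable X) (hY : Measurable Y) {φ : ℝ → ℝ} (hφ : Measurable φ) :
    ∫ ω, φ (X ω) * Y ω ∂μ = (∫ x, φ x ∂μ.map X) * ∫ ω, Y ω ∂μ := by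
  rw [integral_map hX.aemeasurable hφ.aestronglyMeasurable]
  exact (h.comp hφ measurable_id).integral_fun_mul_eq_mul_integral
    (hφ.comp hX).aestronglyMeasurable hY.aestronglyMeasurable

end ProbabilityTheory.IndepFun

theorem statement19_general {Ω : Type*} [MeasurableSpace Ω] (μ : Measure Ω) [IsProbabilityMeasure μ]
    (w : ℝ → Ω → ℝ)
    (hwmeas : ∀ t, Measurable (w t))
    (hwcont : ∀ ω, Continuous fun t => w t ω)
    (hw0 : ∀ ω, w 0 ω = 0)
    -- Brownian increments are centered Gaussian:
    (hgauss : ∀ s t : ℝ, 0 ≤ s → s ≤ t →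
      Measure.map (fun ω => w t ω - w s ω) μ = gaussianReal 0 (t - s).toNNReal)
    (T t₁ σ x₀ : ℝ) (ht₁ : 0 < t₁) (hσ : 0 < σ) (hx : 0 < x₀)
    -- the post-`t₁` increments are independent of `w_{t₁}`:
    (hindep : IndepFun (fun ω => w t₁ ω) (fun ω => fun u : ℝ => w (t₁ + u) ω - w t₁ ω) μ)
    (payoff : ℝ → Ω → ℝ)
    (hpay : ∀ y ω, payoff y ω =
      max (y * Real.exp (σ * w T ω - σ ^ 2 * T / 2)
        - (1 / (T - t₁)) * ∫ u in t₁..T, y * Real.exp (σ * w u ω - σ ^ 2 * u / 2)) 0) :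
    HasDerivAt (fun y : ℝ => ∫ ω, payoff y ω ∂μ)
      (∫ ω, payoff x₀ ω * (w t₁ ω / (t₁ * σ * x₀)) ∂μ) x₀ := by
  lift t₁ to ℝ≥0 using ht₁.le
  set H : Ω → ℝ := fun ω =>
    forwardStartAsianCall t₁ T fun u => expMartingale σ (u - t₁) (w u ω - w t₁ ω)
  have hfactor : ∀ y, 0 ≤ y → ∀ ω, payoff y ω = y * expMartingale σ t₁ (w t₁ ω) * H ω :=
    fun y hy ω => (hpay y ω).trans
      (forwardStartAsianCall_mul_expMartingale σ t₁ T (fun u => w u ω) hy)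
  have hH_comap := measurable_comap_increments_forwardStartAsianCall hwcont σ t₁ T
  have hH : Measurable H :=
    hH_comap.mono (measurable_pi_lambda _ fun u => (hwmeas _).sub (hwmeas _)).comap_le le_rfl
  have hindepH : IndepFun (w t₁) H μ := hindep.of_measurable_comap hH_comap
  have hlaw : μ.map (w t₁) = gaussianReal 0 t₁ := by
    simpa [hw0] using hgauss 0 t₁ le_rfl ht₁.le
  have hE : ∫ ω, expMartingale σ t₁ (w t₁ ω) * H ω ∂μ = ∫ ω, H ω ∂μ := by
    rw [hindepH.integral_comp_mul_eq_integral_map_mul (hwmeas t₁) hH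
      (measurable_expMartingale σ t₁), hlaw, integral_expMartingale_gaussianReal, one_mul]
  have hEw : ∫ ω, w t₁ ω * expMartingale σ t₁ (w t₁ ω) * H ω ∂μ = σ * t₁ * ∫ ω, H ω ∂μ := by
    rw [hindepH.integral_comp_mul_eq_integral_map_mul (hwmeas t₁) hH
      (φ := fun x => x * expMartingale σ t₁ x) (measurable_id.mul (measurable_expMartingale σ t₁)),
      hlaw, integral_mul_expMartingale_gaussianReal]
  have hprice : (fun y => ∫ ω, payoff y ω ∂μ) =ᶠ[𝓝 x₀] fun y => y * ∫ ω, H ω ∂μ := by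
    filter_upwards [Ioi_mem_nhds hx] with y hy
    simp only [hfactor y hy.le, mul_assoc, integral_const_mul, hE]
  have hweight : ∫ ω, payoff x₀ ω * (w t₁ ω / (t₁ * σ * x₀)) ∂μ = ∫ ω, H ω ∂μ := by
    have hintegrand : ∀ ω, payoff x₀ ω * (w t₁ ω / (t₁ * σ * x₀))
        = w t₁ ω * expMartingale σ t₁ (w t₁ ω) * H ω / (t₁ * σ) := fun ω => by
      rw [hfactor x₀ hx.le]
      field_simp
    simp only [hintegrand, integral_div, hEw]
    field_simp
  rw [hweight]
  exact ((hasDerivAt_id x₀).mul_const _).congr_of_eventuallyEq hprice |>.congr_deriv (one_mul _)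

/-- in the Black–Scholes model `x_t = x₀ exp(σ w_t - σ²t/2)` (`r = 0`), the Delta
of the forward-start floating-strike Asian call
`g(X_T) = (x_T - (1/(T-t₁)) ∫_{t₁}^T x_u du)⁺` is
`Δ_{x₀} E[g(X_T)] = E[g(X_T) · w_{t₁}/(t₁ σ x₀)]`. -/
theorem statement19 {Ω : Type*} [MeasurableSpace Ω] (μ : Measure Ω) [IsProbabilityMeasure μ]
    (w : ℝ → Ω → ℝ)
    (hwmeas : ∀ t, Measurable (w t))
    (hwcont : ∀ ω, Continuous fun t => w t ω)
    (hw0 : ∀ ω, w 0 ω = 0)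
    -- Brownian increments are centered Gaussian:
    (hgauss : ∀ s t : ℝ, 0 ≤ s → s ≤ t →
      Measure.map (fun ω => w t ω - w s ω) μ = gaussianReal 0 (t - s).toNNReal)
    (T t₁ σ x₀ : ℝ) (ht₁ : 0 < t₁) (ht₁T : t₁ < T) (hσ : 0 < σ) (hx : 0 < x₀)
    -- the post-`t₁` increments are independent of `w_{t₁}`:
    (hindep : IndepFun (fun ω => w t₁ ω) (fun ω => fun u : ℝ => w (t₁ + u) ω - w t₁ ω) μ)
    (payoff : ℝ → Ω → ℝ)
    (hpay : ∀ y ω, payoff y ω =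
      max (y * Real.exp (σ * w T ω - σ ^ 2 * T / 2)
        - (1 / (T - t₁)) * ∫ u in t₁..T, y * Real.exp (σ * w u ω - σ ^ 2 * u / 2)) 0)
    (hint1 : Integrable (payoff x₀) μ)
    (hint2 : Integrable (fun ω => payoff x₀ ω * w t₁ ω) μ) :
    HasDerivAt (fun y : ℝ => ∫ ω, payoff y ω ∂μ)
      (∫ ω, payoff x₀ ω * (w t₁ ω / (t₁ * σ * x₀)) ∂μ) x₀ :=
  statement19_general μ w hwmeas hwcont hw0 hgauss T t₁ σ x₀ ht₁ hσ hx hindep payoff hpay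
end
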